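/- Let d ≥ 2 be an integer, 1 < α < 2, 0 < γ ≤ 2. There exists a constant N' > 0, depending only on d, α, γ, such that for every nonnegative f ∈ C_c(ℝ^{d+1}) and every ρ > 0, ∫∫_{{(s,y) : 0 ≤ s ≤ ρ^α, |y| ≤ s^{1/α}}} s^{γ/2 − d/α − 1} f(s,y) dy ds ≤ N' ρ^{αγ/2} M f(0,0). -/

import Mathlib

open MeasureTheory ENNReal Set Filter

noncomputable section

/-- The spatial space `ℝ^d`. -/
abbrev Spc (d : ℕ) := EuclideanSpace ℝ (Fin d)

/-- Parabolic cylinder `C_ρ(t,x) = {(s,y) : t ≤ s ≤ t + ρ^α, |y - x| ≤ ρ}`. -/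
def cylP (d : ℕ) (α ρ t : ℝ) (x : Spc d) : Set (ℝ × Spc d) :=
  {p | t ≤ p.1 ∧ p.1 ≤ t + ρ ^ α ∧ dist p.2 x ≤ ρ}

/-- Average of `f` over the parabolic cylinder `C_ρ(t,x)`. -/
def cylAvg (d : ℕ) (α ρ t : ℝ) (x : Spc d) (f : ℝ × Spc d → ℝ≥0∞) : ℝ≥0∞ :=
  (volume (cylP d α ρ t x))⁻¹ * ∫⁻ p in cylP d α ρ t x, f p

/-- Parabolic Morrey norm `‖v‖_{E_q}`. -/
def morreyE (d : ℕ) (α q : ℝ) (v : ℝ × Spc d → ℝ≥0∞) : ℝ≥0∞ :=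
  ⨆ (ρ : ℝ) (_ : 0 < ρ) (t : ℝ) (x : Spc d),
    ENNReal.ofReal ρ * (cylAvg d α ρ t x (fun p => v p ^ q)) ^ (1 / q)

/-- Elliptic Morrey norm `‖w‖_{M_q}` on `ℝ^d`. -/
def morreyM (d : ℕ) (q : ℝ) (w : Spc d → ℝ≥0∞) : ℝ≥0∞ :=
  ⨆ (ρ : ℝ) (_ : 0 < ρ) (x : Spc d),
    ENNReal.ofReal ρ *
      ((volume (Metric.closedBall x ρ))⁻¹ *
        ∫⁻ y in Metric.closedBall x ρ, w y ^ q) ^ (1 / q)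

/-- Fractional (parabolic) maximal function `M_β f(t,x)`. -/
def maxFun (d : ℕ) (α β : ℝ) (f : ℝ × Spc d → ℝ≥0∞) (t : ℝ) (x : Spc d) : ℝ≥0∞ :=
  ⨆ (ρ : ℝ) (_ : 0 < ρ), ENNReal.ofReal (ρ ^ β) * cylAvg d α ρ t x f

/-- Uncentered parabolic maximal function `M̂ f(z)`, sup over all parabolic
cylinders containing `z`. -/
def hatM (d : ℕ) (α : ℝ) (f : ℝ × Spc d → ℝ≥0∞) (z : ℝ × Spc d) : ℝ≥0∞ :=
  ⨆ (ρ : ℝ) (_ : 0 < ρ) (t : ℝ) (x : Spc d) (_ : z ∈ cylP d α ρ t x),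
    cylAvg d α ρ t x f

/-- The kernel `p_γ(s,y) = 1_{s>0} s^{γ/2} min(|y|^{-d-α}, s^{-(d+α)/α})`. -/
def pKer (d : ℕ) (α γ : ℝ) (s : ℝ) (y : Spc d) : ℝ≥0∞ :=
  if 0 < s then
    (if s ^ (1 / α) ≤ ‖y‖ then ENNReal.ofReal (s ^ (γ / 2) * ‖y‖ ^ (-(d : ℝ) - α))
     else ENNReal.ofReal (s ^ (γ / 2 - ((d : ℝ) + α) / α)))
  else 0

/-- `P_γ f(t,x) = ∫ p_γ(s,y) f(t+s, x+y) dy ds`. -/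
def Pop (d : ℕ) (α γ : ℝ) (f : ℝ × Spc d → ℝ≥0∞) (t : ℝ) (x : Spc d) : ℝ≥0∞ :=
  ∫⁻ p : ℝ × Spc d, pKer d α γ p.1 p.2 * f (t + p.1, x + p.2)

/-- `P*_γ f(t,x) = ∫ p_γ(s,y) f(t-s, x+y) dy ds`. -/
def PopStar (d : ℕ) (α γ : ℝ) (f : ℝ × Spc d → ℝ≥0∞) (t : ℝ) (x : Spc d) : ℝ≥0∞ :=
  ∫⁻ p : ℝ × Spc d, pKer d α γ p.1 p.2 * f (t - p.1, x + p.2)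

/-!
Write the weight as `s^e` with `e = γ/2 - d/α - 1 ≤ 0` and split the region, up to the null slice
`s = 0`, into the dyadic shells `ρ/2^{k+1} < s^{1/α} ≤ ρ/2^k`. The `k`-th shell lies in
`C_{ρ/2^k}(0,0)`, where `s^e ≤ (ρ/2^{k+1})^{αe}`, so it contributes at most
`2^{-αe} |B_1| (ρ/2^k)^{α(e+1)+d} M f(0,0)`. Since `α(e+1)+d = αγ/2 > 0`, these bounds sum to a
geometric series.
-/

theorem volume_cylP (d : ℕ) (α : ℝ) {ρ : ℝ} (hρ : 0 < ρ) (t : ℝ) (x : Spc d) :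
    volume (cylP d α ρ t x) =
      ENNReal.ofReal (ρ ^ (α + d)) * volume (Metric.ball (0 : Spc d) 1) := by
  have hprod : cylP d α ρ t x = Icc t (t + ρ ^ α) ×ˢ Metric.closedBall x ρ := by
    ext z
    simp [cylP, Metric.mem_closedBall, and_assoc]
  rw [hprod, Measure.volume_eq_prod, Measure.prod_prod, Real.volume_Icc,
    Measure.addHaar_closedBall _ _ hρ.le, finrank_euclideanSpace_fin, add_sub_cancel_left,
    ← mul_assoc, ← ENNReal.ofReal_mul (by positivity), Real.rpow_add hρ, Real.rpow_natCast]

theorem setLIntegral_cylP_le_volume_mul_maxFun (d : ℕ) (α : ℝ) {ρ : ℝ} (hρ : 0 < ρ) (t : ℝ)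
    (x : Spc d) (f : ℝ × Spc d → ℝ≥0∞) :
    ∫⁻ p in cylP d α ρ t x, f p ≤ volume (cylP d α ρ t x) * maxFun d α 0 f t x := by
  have hvol_ne_zero : volume (cylP d α ρ t x) ≠ 0 := by
    rw [volume_cylP d α hρ]
    exact mul_ne_zero (ENNReal.ofReal_pos.mpr (by positivity)).ne'
      (Metric.measure_ball_pos _ _ one_pos).ne'
  have hvol_ne_top : volume (cylP d α ρ t x) ≠ ⊤ := by
    rw [volume_cylP d α hρ]
    exact ENNReal.mul_ne_top ENNReal.ofReal_ne_top measure_ball_lt_top.ne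
  have havg : cylAvg d α ρ t x f ≤ maxFun d α 0 f t x := by
    refine le_iSup₂_of_le ρ hρ ?_
    rw [Real.rpow_zero, ENNReal.ofReal_one, one_mul]
  calc ∫⁻ p in cylP d α ρ t x, f p = volume (cylP d α ρ t x) * cylAvg d α ρ t x f := by
        rw [cylAvg, ← mul_assoc, ENNReal.mul_inv_cancel hvol_ne_zero hvol_ne_top, one_mul]
    _ ≤ volume (cylP d α ρ t x) * maxFun d α 0 f t x := mul_le_mul_right havg _

theorem exists_div_two_pow_lt_le {x ρ : ℝ} (hx : 0 < x) (hxρ : x ≤ ρ) :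
    ∃ k : ℕ, ρ / 2 ^ (k + 1) < x ∧ x ≤ ρ / 2 ^ k := by
  obtain ⟨k, hk, hk'⟩ := exists_nat_pow_near ((one_le_div hx).mpr hxρ) one_lt_two
  exact ⟨k, (div_lt_iff₀' (by positivity)).mpr ((div_lt_iff₀ hx).mp hk'),
    (le_div_iff₀' (by positivity)).mpr ((le_div_iff₀ hx).mp hk)⟩

/-- `Q^c ∩ C_ρ(0,0)`, with the cone closed. -/
def nearRegion (d : ℕ) (α ρ : ℝ) : Set (ℝ × Spc d) :=
  {z | 0 ≤ z.1 ∧ z.1 ≤ ρ ^ α ∧ ‖z.2‖ ≤ z.1 ^ (1 / α)}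

theorem measurableSet_nearRegion (d : ℕ) (α ρ : ℝ) : MeasurableSet (nearRegion d α ρ) := by
  unfold nearRegion
  measurability

def coneShell (d : ℕ) (α a b : ℝ) : Set (ℝ × Spc d) :=
  {z | 0 ≤ z.1 ∧ a < z.1 ^ (1 / α) ∧ z.1 ^ (1 / α) ≤ b ∧ ‖z.2‖ ≤ z.1 ^ (1 / α)}

theorem measurableSet_coneShell (d : ℕ) (α a b : ℝ) : MeasurableSet (coneShell d α a b) := by
  unfold coneShell
  measurability

theorem coneShell_subset_cylP (d : ℕ) {α : ℝ} (hα : 0 < α) (a b : ℝ) :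
    coneShell d α a b ⊆ cylP d α b 0 0 := by
  rintro z ⟨hs, -, hrb, hy⟩
  refine ⟨hs, ?_, by rw [dist_zero_right]; exact hy.trans hrb⟩
  calc z.1 = (z.1 ^ (1 / α)) ^ α := by rw [one_div, Real.rpow_inv_rpow hs hα.ne']
    _ ≤ 0 + b ^ α := by rw [zero_add]; exact Real.rpow_le_rpow (by positivity) hrb hα.le

theorem setLIntegral_coneShell_le (d : ℕ) {α e a b : ℝ} (hα : 0 < α) (he : e ≤ 0) (ha : 0 < a)
    (hb : 0 < b) (f : ℝ × Spc d → ℝ≥0∞) :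
    ∫⁻ z in coneShell d α a b, ENNReal.ofReal (z.1 ^ e) * f z ≤
      ENNReal.ofReal (a ^ (α * e)) * (volume (cylP d α b 0 0) * maxFun d α 0 f 0 0) := by
  have hweight : ∀ z ∈ coneShell d α a b, z.1 ^ e ≤ a ^ (α * e) := by
    rintro z ⟨hs, har, -, -⟩
    calc z.1 ^ e = (z.1 ^ (1 / α)) ^ (α * e) := by
          rw [← Real.rpow_mul hs, one_div, inv_mul_cancel_left₀ hα.ne']
      _ ≤ a ^ (α * e) :=
          Real.rpow_le_rpow_of_nonpos ha har.le (mul_nonpos_of_nonneg_of_nonpos hα.le he)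
  calc ∫⁻ z in coneShell d α a b, ENNReal.ofReal (z.1 ^ e) * f z
      ≤ ∫⁻ z in coneShell d α a b, ENNReal.ofReal (a ^ (α * e)) * f z :=
        setLIntegral_mono' (measurableSet_coneShell d α a b)
          fun z hz => mul_le_mul_left (ENNReal.ofReal_le_ofReal (hweight z hz)) _
    _ = ENNReal.ofReal (a ^ (α * e)) * ∫⁻ z in coneShell d α a b, f z :=
        lintegral_const_mul' _ _ ENNReal.ofReal_ne_top
    _ ≤ ENNReal.ofReal (a ^ (α * e)) * ∫⁻ z in cylP d α b 0 0, f z :=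
        mul_le_mul_right (lintegral_mono_set (coneShell_subset_cylP d hα a b)) _
    _ ≤ _ := mul_le_mul_right (setLIntegral_cylP_le_volume_mul_maxFun d α hb 0 0 f) _

theorem ae_subset_iUnion_coneShell (d : ℕ) {α : ℝ} (hα : 0 < α) {ρ : ℝ} (hρ : 0 < ρ) :
    nearRegion d α ρ ≤ᵐ[volume]
      ⋃ k : ℕ, coneShell d α (ρ / 2 ^ (k + 1)) (ρ / 2 ^ k) := by
  filter_upwards [Measure.quasiMeasurePreserving_fst.ae (Measure.ae_ne volume 0)]
    with z hz ⟨hs, hsρ, hy⟩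
  have hr : 0 < z.1 ^ (1 / α) := Real.rpow_pos_of_pos (lt_of_le_of_ne hs (Ne.symm hz)) _
  have hrρ : z.1 ^ (1 / α) ≤ ρ := by
    calc z.1 ^ (1 / α) ≤ (ρ ^ α) ^ (1 / α) := Real.rpow_le_rpow hs hsρ (by positivity)
      _ = ρ := by rw [one_div, Real.rpow_rpow_inv hρ.le hα.ne']
  obtain ⟨k, hk⟩ := exists_div_two_pow_lt_le hr hrρ
  exact mem_iUnion.mpr ⟨k, hs, hk.1, hk.2, hy⟩

theorem div_two_pow_rpow {ρ : ℝ} (hρ : 0 ≤ ρ) (β : ℝ) (k : ℕ) :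
    (ρ / 2 ^ k) ^ β = ρ ^ β * ((2 ^ β)⁻¹) ^ k := by
  rw [Real.div_rpow hρ (by positivity), ← Real.rpow_natCast 2 k, ← Real.rpow_mul zero_le_two,
    mul_comm, Real.rpow_mul zero_le_two, Real.rpow_natCast, div_eq_mul_inv, inv_pow]

theorem half_rpow_mul_rpow {r : ℝ} (hr : 0 < r) (α e c : ℝ) :
    (r / 2) ^ (α * e) * r ^ (α + c) = (2 ^ (α * e))⁻¹ * r ^ (α * (e + 1) + c) := by
  rw [Real.div_rpow hr.le zero_le_two, div_mul_eq_mul_div, ← Real.rpow_add hr, div_eq_inv_mul]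
  ring_nf

theorem inv_two_rpow_lt_one {β : ℝ} (hβ : 0 < β) : ((2 : ℝ) ^ β)⁻¹ < 1 :=
  inv_lt_one_of_one_lt₀ (Real.one_lt_rpow one_lt_two hβ)

def nearFieldConst (d : ℕ) (α e : ℝ) : ℝ :=
  (2 ^ (α * e))⁻¹ * (1 - (2 ^ (α * (e + 1) + d))⁻¹)⁻¹ *
    (volume (Metric.ball (0 : Spc d) 1)).toReal

theorem nearFieldConst_pos (d : ℕ) {α e : ℝ} (hβ : 0 < α * (e + 1) + d) :
    0 < nearFieldConst d α e := by
  have hV : 0 < (volume (Metric.ball (0 : Spc d) 1)).toReal :=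
    ENNReal.toReal_pos (Metric.measure_ball_pos _ _ one_pos).ne' measure_ball_lt_top.ne
  have hq : 0 < 1 - ((2 : ℝ) ^ (α * (e + 1) + d))⁻¹ := sub_pos.mpr (inv_two_rpow_lt_one hβ)
  unfold nearFieldConst
  positivity

theorem setLIntegral_rpow_mul_le_maxFun (d : ℕ) {α e ρ : ℝ} (hα : 0 < α) (he : e ≤ 0)
    (hβ : 0 < α * (e + 1) + d) (hρ : 0 < ρ) (f : ℝ × Spc d → ℝ≥0∞) :
    ∫⁻ z in nearRegion d α ρ,
        ENNReal.ofReal (z.1 ^ e) * f z ≤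
      ENNReal.ofReal (nearFieldConst d α e * ρ ^ (α * (e + 1) + d)) * maxFun d α 0 f 0 0 := by
  set β := α * (e + 1) + d
  set q : ℝ := (2 ^ β)⁻¹
  set c : ℝ := (2 ^ (α * e))⁻¹
  set V := volume (Metric.ball (0 : Spc d) 1)
  set M := maxFun d α 0 f 0 0
  have hshell : ∀ k : ℕ, ∫⁻ z in coneShell d α (ρ / 2 ^ (k + 1)) (ρ / 2 ^ k),
      ENNReal.ofReal (z.1 ^ e) * f z ≤
        ENNReal.ofReal (c * ρ ^ β) * ENNReal.ofReal q ^ k * (V * M) := by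
    intro k
    have hr : 0 < ρ / 2 ^ k := by positivity
    calc _ ≤ ENNReal.ofReal ((ρ / 2 ^ k / 2) ^ (α * e)) *
          (volume (cylP d α (ρ / 2 ^ k) 0 0) * M) := by
          rw [div_div, ← pow_succ]
          exact setLIntegral_coneShell_le d hα he (by positivity) hr f
      _ = _ := by
          rw [volume_cylP d α hr, ← mul_assoc, ← mul_assoc, ← ENNReal.ofReal_mul (by positivity),
            half_rpow_mul_rpow hr, div_two_pow_rpow hρ.le, ← mul_assoc,
            ENNReal.ofReal_mul (by positivity), ENNReal.ofReal_pow (by positivity)]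
          ring
  have hq : 0 < 1 - q := sub_pos.mpr (inv_two_rpow_lt_one hβ)
  calc _ ≤ ∫⁻ z in ⋃ k : ℕ, coneShell d α (ρ / 2 ^ (k + 1)) (ρ / 2 ^ k),
          ENNReal.ofReal (z.1 ^ e) * f z :=
        lintegral_mono_set' (ae_subset_iUnion_coneShell d hα hρ)
    _ ≤ ∑' k : ℕ, ∫⁻ z in coneShell d α (ρ / 2 ^ (k + 1)) (ρ / 2 ^ k),
          ENNReal.ofReal (z.1 ^ e) * f z := lintegral_iUnion_le _ _
    _ ≤ ∑' k : ℕ, ENNReal.ofReal (c * ρ ^ β) * ENNReal.ofReal q ^ k * (V * M) :=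
        ENNReal.tsum_le_tsum hshell
    _ = ENNReal.ofReal (c * ρ ^ β) * ENNReal.ofReal (1 - q)⁻¹ *
          (ENNReal.ofReal V.toReal * M) := by
        rw [ENNReal.tsum_mul_right, ENNReal.tsum_mul_left, ENNReal.tsum_geometric,
          ENNReal.ofReal_inv_of_pos hq, ENNReal.ofReal_sub _ (by positivity), ENNReal.ofReal_one,
          ENNReal.ofReal_toReal measure_ball_lt_top.ne]
    _ = _ := by
        rw [← mul_assoc, ← ENNReal.ofReal_mul (by positivity), ← ENNReal.ofReal_mul (by positivity)]
        congr 2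
        unfold nearFieldConst
        ring

theorem stmt_9_general (d : ℕ) (α γ : ℝ) (hα1 : 1 < α) (hγ1 : 0 < γ) (hγ2 : γ ≤ 2) :
    ∃ N' : ℝ, 0 < N' ∧
      ∀ (f : ℝ × Spc d → ℝ), Continuous f → HasCompactSupport f → (∀ z, 0 ≤ f z) →
      ∀ (ρ : ℝ), 0 < ρ →
      (∫⁻ z in {z : ℝ × Spc d | 0 ≤ z.1 ∧ z.1 ≤ ρ ^ α ∧ ‖z.2‖ ≤ z.1 ^ (1 / α)},
          ENNReal.ofReal (z.1 ^ (γ / 2 - d / α - 1) * f z)) ≤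
        ENNReal.ofReal (N' * ρ ^ (α * γ / 2)) *
          maxFun d α 0 (fun z => ENNReal.ofReal (f z)) 0 0 := by
  have hα : 0 < α := one_pos.trans hα1
  set e := γ / 2 - d / α - 1
  have hβ : α * (e + 1) + d = α * γ / 2 := by
    simp only [e]
    field_simp
    ring
  have he : e ≤ 0 := by
    have : 0 ≤ (d : ℝ) / α := by positivity
    simp only [e]
    linarith
  refine ⟨nearFieldConst d α e, nearFieldConst_pos d (by rw [hβ]; positivity),
    fun f _ _ _ ρ hρ => ?_⟩
  rw [← hβ]
  calc _ = ∫⁻ z in nearRegion d α ρ,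
        ENNReal.ofReal (z.1 ^ e) * ENNReal.ofReal (f z) :=
        setLIntegral_congr_fun (measurableSet_nearRegion d α ρ) fun z hz =>
          ENNReal.ofReal_mul (Real.rpow_nonneg hz.1 _)
    _ ≤ _ := setLIntegral_rpow_mul_le_maxFun d hα he (by rw [hβ]; positivity) hρ _

/-- near-field estimate over the region `Q^c ∩ C_ρ(0,0)`, where
`Q^c = {(s,y) : |y| < s^{1/α}}`:
`∫∫_{0 ≤ s ≤ ρ^α, |y| ≤ s^{1/α}} s^{γ/2-d/α-1} f(s,y) dy ds ≤ N' ρ^{αγ/2} M f(0,0)`. -/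
theorem stmt_9 (d : ℕ) (hd : 2 ≤ d) (α γ : ℝ) (hα1 : 1 < α) (hα2 : α < 2)
    (hγ1 : 0 < γ) (hγ2 : γ ≤ 2) :
    ∃ N' : ℝ, 0 < N' ∧
      ∀ (f : ℝ × Spc d → ℝ), Continuous f → HasCompactSupport f → (∀ z, 0 ≤ f z) →
      ∀ (ρ : ℝ), 0 < ρ →
      (∫⁻ z in {z : ℝ × Spc d | 0 ≤ z.1 ∧ z.1 ≤ ρ ^ α ∧ ‖z.2‖ ≤ z.1 ^ (1 / α)},
          ENNReal.ofReal (z.1 ^ (γ / 2 - d / α - 1) * f z)) ≤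
        ENNReal.ofReal (N' * ρ ^ (α * γ / 2)) *
          maxFun d α 0 (fun z => ENNReal.ofReal (f z)) 0 0 :=
  stmt_9_general d α γ hα1 hγ1 hγ2
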